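/- arXiv:1302.0973 — 3 statements merged into one kernel-verified Lean document; each statement's English description precedes it below -/
import Mathlib

section
/- Let →_{S1}, →_{S2} and →_W be binary relations on a type, and for relations →_S and →_W let →_{S/W} denote the relative relation (→_W)* ∘ →_S ∘ (→_W)*. Then for any term t and any n, every sequence of n steps of →_{(S1∪S2)/W} from t yields k steps of →_{S1/(S2∪W)} and m steps of →_{S2/(S1∪W)} from t with k + m = n; hence dh(t, →_{(S1∪S2)/W}) ≤ dh(t, →_{S1/(S2∪W)}) + dh(t, →_{S2/(S1∪W)}) whenever the right-hand side heights are defined. -/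
/-- The relative relation `A/B = B* ∘ A ∘ B*`. -/
def relStep {T : Type*} (A B : T → T → Prop) (s t : T) : Prop :=
  ∃ u v, Relation.ReflTransGen B s u ∧ A u v ∧ Relation.ReflTransGen B v t

private lemma relStep_prepend {T : Type*} {A B : T → T → Prop} {t s x : T}
    (h : Relation.ReflTransGen B t s) (hs : relStep A B s x) : relStep A B t x := by
  obtain ⟨u, v, hsu, hA, hvx⟩ := hs
  exact ⟨u, v, h.trans hsu, hA, hvx⟩

private lemma split_aux {T : Type*} (S1 S2 W : T → T → Prop) :
    ∀ (n : ℕ) (t : T) (c : ℕ → T), c 0 = t →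
      (∀ i < n, relStep (fun a b => S1 a b ∨ S2 a b) W (c i) (c (i + 1))) →
      ∃ k m : ℕ, k + m = n ∧
        (∃ c1 : ℕ → T, c1 0 = t ∧
          ∀ i < k, relStep S1 (fun a b => S2 a b ∨ W a b) (c1 i) (c1 (i + 1))) ∧
        (∃ c2 : ℕ → T, c2 0 = t ∧
          ∀ i < m, relStep S2 (fun a b => S1 a b ∨ W a b) (c2 i) (c2 (i + 1))) := by
  intro n
  induction n with
  | zero =>
    intro t c hc0 _
    exact ⟨0, 0, rfl, ⟨fun _ => t, rfl, fun i hi => by omega⟩,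
      ⟨fun _ => t, rfl, fun i hi => by omega⟩⟩
  | succ n ih =>
    intro t c hc0 hc
    obtain ⟨k, m, hkm, ⟨c1, hc10, hc1⟩, ⟨c2, hc20, hc2⟩⟩ :=
      ih (c 1) (fun i => c (i + 1)) rfl (fun i hi => hc (i + 1) (by omega))
    obtain ⟨u, v, htu, hA, hvc1⟩ := hc 0 (by omega)
    rw [hc0] at htu
    have htu1 : Relation.ReflTransGen (fun a b => S2 a b ∨ W a b) t u :=
      Relation.ReflTransGen.mono (fun a b h => Or.inr h) _ _ htu
    have htu2 : Relation.ReflTransGen (fun a b => S1 a b ∨ W a b) t u :=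
      Relation.ReflTransGen.mono (fun a b h => Or.inr h) _ _ htu
    have hvc11 : Relation.ReflTransGen (fun a b => S2 a b ∨ W a b) v (c 1) :=
      Relation.ReflTransGen.mono (fun a b h => Or.inr h) _ _ hvc1
    have hvc12 : Relation.ReflTransGen (fun a b => S1 a b ∨ W a b) v (c 1) :=
      Relation.ReflTransGen.mono (fun a b h => Or.inr h) _ _ hvc1
    rcases hA with h1 | h2
    · -- first step is an S1 step
      refine ⟨k + 1, m, by omega, ?_, ?_⟩
      · refine ⟨fun i => if i = 0 then t else c1 (i - 1), by simp, ?_⟩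
        intro i hi
        rcases Nat.eq_zero_or_pos i with h0 | hpos
        · subst h0
          simpa using ⟨u, v, htu1, h1, by simpa [hc10] using hvc11⟩
        · have h1' : i ≠ 0 := by omega
          have h2' : i + 1 ≠ 0 := by omega
          simp only [h1', h2', if_neg, ite_false]
          have : i - 1 + 1 = i + 1 - 1 := by omega
          rw [← this]
          exact hc1 (i - 1) (by omega)
      · -- prepend (S1 ∪ W)* prefix t → c 1 to c2
        have hpref : Relation.ReflTransGen (fun a b => S1 a b ∨ W a b) t (c 1) :=
          (htu2.tail (Or.inl h1)).trans hvc12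
        refine ⟨fun i => if i = 0 then t else c2 i, by simp, ?_⟩
        intro i hi
        rcases Nat.eq_zero_or_pos i with h0 | hpos
        · subst h0
          simp only [if_pos rfl, Nat.one_ne_zero, ite_false]
          exact relStep_prepend (by rw [← hc20] at hpref; exact hpref) (hc2 0 hi)
        · have h1' : i ≠ 0 := by omega
          have h2' : i + 1 ≠ 0 := by omega
          simp only [h1', h2', ite_false]
          exact hc2 i hi
    · -- first step is an S2 step
      refine ⟨k, m + 1, by omega, ?_, ?_⟩
      · have hpref : Relation.ReflTransGen (fun a b => S2 a b ∨ W a b) t (c 1) :=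
          (htu1.tail (Or.inl h2)).trans hvc11
        refine ⟨fun i => if i = 0 then t else c1 i, by simp, ?_⟩
        intro i hi
        rcases Nat.eq_zero_or_pos i with h0 | hpos
        · subst h0
          simp only [if_pos rfl, Nat.one_ne_zero, ite_false]
          exact relStep_prepend (by rw [← hc10] at hpref; exact hpref) (hc1 0 hi)
        · have h1' : i ≠ 0 := by omega
          have h2' : i + 1 ≠ 0 := by omega
          simp only [h1', h2', ite_false]
          exact hc1 i hi
      · refine ⟨fun i => if i = 0 then t else c2 (i - 1), by simp, ?_⟩
        intro i hi
        rcases Nat.eq_zero_or_pos i with h0 | hpos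
        · subst h0
          simpa using ⟨u, v, htu2, h2, by simpa [hc20] using hvc12⟩
        · have h1' : i ≠ 0 := by omega
          have h2' : i + 1 ≠ 0 := by omega
          simp only [h1', h2', ite_false]
          have : i - 1 + 1 = i + 1 - 1 := by omega
          rw [← this]
          exact hc2 (i - 1) (by omega)

/-- every `n`-step `(S1 ∪ S2)/W`-derivation from `t` splits into `k` steps of
`S1/(S2 ∪ W)` and `m` steps of `S2/(S1 ∪ W)` from `t` with `k + m = n`; consequently
`dh(t, (S1∪S2)/W) ≤ dh(t, S1/(S2∪W)) + dh(t, S2/(S1∪W))` whenever the latter are defined. -/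
theorem stmt_4 {T : Type*} (S1 S2 W : T → T → Prop) (t : T) :
    (∀ (n : ℕ) (c : ℕ → T), c 0 = t →
      (∀ i < n, relStep (fun a b => S1 a b ∨ S2 a b) W (c i) (c (i + 1))) →
      ∃ k m : ℕ, k + m = n ∧
        (∃ c1 : ℕ → T, c1 0 = t ∧
          ∀ i < k, relStep S1 (fun a b => S2 a b ∨ W a b) (c1 i) (c1 (i + 1))) ∧
        (∃ c2 : ℕ → T, c2 0 = t ∧
          ∀ i < m, relStep S2 (fun a b => S1 a b ∨ W a b) (c2 i) (c2 (i + 1)))) ∧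
    (∀ B1 B2 : ℕ,
      (∀ (k : ℕ) (c1 : ℕ → T), c1 0 = t →
        (∀ i < k, relStep S1 (fun a b => S2 a b ∨ W a b) (c1 i) (c1 (i + 1))) → k ≤ B1) →
      (∀ (m : ℕ) (c2 : ℕ → T), c2 0 = t →
        (∀ i < m, relStep S2 (fun a b => S1 a b ∨ W a b) (c2 i) (c2 (i + 1))) → m ≤ B2) →
      ∀ (n : ℕ) (c : ℕ → T), c 0 = t →
        (∀ i < n, relStep (fun a b => S1 a b ∨ S2 a b) W (c i) (c (i + 1))) → n ≤ B1 + B2) := by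
  constructor
  · exact fun n c hc0 hc => split_aux S1 S2 W n t c hc0 hc
  · intro B1 B2 hB1 hB2 n c hc0 hc
    obtain ⟨k, m, hkm, ⟨c1, hc10, hc1⟩, ⟨c2, hc20, hc2⟩⟩ := split_aux S1 S2 W n t c hc0 hc
    have := hB1 k c1 hc10 hc1
    have := hB2 m c2 hc20 hc2
    omega
end

section
/- Trees and step counting: in a finitely branching rooted tree T whose edges are labeled by elements of a set L, and given a subset K ⊆ L, if every leaf of the tree obtained by removing all maximal subtrees containing no K-labeled edges is the target of a K-labeled edge and the number of K-labeled edges in T is finite, then the pruned tree is finite. -/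
/-- A rooted, edge-labeled tree, given by a prefix-closed set of node positions
(lists of child indices) containing the root `[]`; `lab q` is the label of the edge
leading into the node `q` (meaningful for `q ≠ []`). -/
structure ETree (L : Type*) where
  nodes : Set (List ℕ)
  root_mem : [] ∈ nodes
  prefix_closed : ∀ p q : List ℕ, p <+: q → q ∈ nodes → p ∈ nodes
  lab : List ℕ → L

/-- The set of edges of `T` whose label lies in `K` (an edge is identified with its
target node). -/
def ETree.edges {L : Type*} (T : ETree L) (K : Set L) : Set (List ℕ) :=
  {q | q ∈ T.nodes ∧ q ≠ [] ∧ T.lab q ∈ K}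

/-- The pruned tree: remove all maximal subtrees containing no `K`-labeled edge, i.e.
keep the root and every node lying on the path to (or below, as target of) a `K`-edge. -/
def ETree.pruned {L : Type*} (T : ETree L) (K : Set L) : Set (List ℕ) :=
  {p | p ∈ T.nodes ∧ (p = [] ∨ ∃ q, q ∈ T.nodes ∧ p <+: q ∧ q ≠ [] ∧ T.lab q ∈ K)}

theorem List.finite_setOf_isPrefix {α : Type*} (q : List α) : {p | p <+: q}.Finite := by
  simpa only [List.mem_inits] using q.inits.finite_toSet

theorem ETree.pruned_subset_insert_biUnion_prefixes {L : Type*} (T : ETree L) (K : Set L) :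
    T.pruned K ⊆ insert [] (⋃ q ∈ T.edges K, {p | p <+: q}) := by
  rintro p ⟨-, rfl | ⟨q, hq, hpq, hqne, hlab⟩⟩
  · exact Set.mem_insert _ _
  · exact Set.mem_insert_of_mem _ (Set.mem_biUnion ⟨hq, hqne, hlab⟩ hpq)

theorem stmt_11_general {L : Type*} (T : ETree L) (K : Set L)
    (hKfin : (T.edges K).Finite) :
    (T.pruned K).Finite :=
  ((hKfin.biUnion fun q _ => q.finite_setOf_isPrefix).insert []).subset
    (T.pruned_subset_insert_biUnion_prefixes K)

/-- in a finitely branching rooted edge-labeled tree `T`, if every leaf of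
the pruned tree (obtained by removing all maximal subtrees with no `K`-edges) is the target
of a `K`-labeled edge, and the number of `K`-labeled edges of `T` is finite, then the
pruned tree is finite. -/
theorem stmt_11 {L : Type*} (T : ETree L) (K : Set L)
    (hfb : ∀ p ∈ T.nodes, {i : ℕ | p ++ [i] ∈ T.nodes}.Finite)
    (hleaf : ∀ p ∈ T.pruned K, (∀ i : ℕ, p ++ [i] ∉ T.pruned K) →
      p ≠ [] ∧ T.lab p ∈ K)
    (hKfin : (T.edges K).Finite) :
    (T.pruned K).Finite :=
  stmt_11_general T K hKfin
end

section
/- From a finite derivation tree one can extract a derivation of the same strict length: let T be a finite rooted tree whose nodes are labeled by terms such that each edge from a node labeled t to children labeled t_1,...,t_n, with label l → r, witnesses a rewrite step t → c_n(t_1,...,t_n), where rules are partitioned into strict rules S and weak rules W. Then there exists a relative rewrite sequence t_root (→_{S/W})^k with k equal to the number of S-labeled edges of T, i.e., dh(t_root, →_{S/W}) ≥ |T|_S. -/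
/-- Derivation trees: rooted trees whose nodes are labeled by terms and whose
(hyper)edges are labeled by applied rules. -/
inductive DTr (T R : Type*) : Type _
  | leaf : T → DTr T R
  | node : T → R → List (DTr T R) → DTr T R

namespace DTr

variable {T R : Type*}

/-- The root label of a derivation tree. -/
def rt : DTr T R → T
  | .leaf t => t
  | .node t _ _ => t

/-- Validity: each edge from a node labeled `t` with rule `ρ` to children labeled
`t₁, …, t_n` witnesses a rewrite step `t →_ρ c_n(t₁,…,t_n)`. -/
inductive valid (step : R → T → T → Prop) (comb : List T → T) : DTr T R → Prop
  | leaf (t : T) : valid step comb (.leaf t)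
  | node (t : T) (ρ : R) (ts : List (DTr T R)) :
      step ρ t (comb (ts.map rt)) → (∀ s ∈ ts, valid step comb s) →
      valid step comb (.node t ρ ts)

/-- The number of edges of the tree labeled by a rule in `S`. -/
def cnt (S : R → Prop) [DecidablePred S] : DTr T R → ℕ
  | .leaf _ => 0
  | .node _ ρ ts => (if S ρ then 1 else 0) + (ts.attach.map (fun s => cnt S s.1)).sum
decreasing_by
  have := List.sizeOf_lt_of_mem s.2
  simp only [DTr.node.sizeOf_spec]
  omega

end DTr

/-!
Induct on the derivation tree. The derivations extracted from the children are run one after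
the other inside the compound context `c_n(…)`, which is possible because rewriting is closed
under that context; the edge at the root is prepended, contributing one `S/W`-step if its
rule is strict and being absorbed into a `W*`-segment otherwise.
-/

open Relation

section RelativeRewriting

variable {T R : Type*} (step : R → T → T → Prop) (S W : R → Prop)

def RuleStep (P : R → Prop) (a b : T) : Prop := ∃ ρ, P ρ ∧ step ρ a b

def RelStep (a b : T) : Prop :=
  ∃ u v, ReflTransGen (RuleStep step W) a u ∧ RuleStep step S u v ∧
    ReflTransGen (RuleStep step W) v b

/-- `RelDeriv step S W n a b` says `a (→_{S/W})^n ∘ →_W^* b`. -/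
inductive RelDeriv : ℕ → T → T → Prop
  | weak {a b : T} : ReflTransGen (RuleStep step W) a b → RelDeriv 0 a b
  | strict {a u v b : T} {n : ℕ} : ReflTransGen (RuleStep step W) a u → RuleStep step S u v →
      RelDeriv n v b → RelDeriv (n + 1) a b

variable {step S W}

namespace RelDeriv

theorem refl (a : T) : RelDeriv step S W 0 a a := weak .refl

theorem head_weak {n : ℕ} {a b c : T} (hab : ReflTransGen (RuleStep step W) a b)
    (hbc : RelDeriv step S W n b c) : RelDeriv step S W n a c := by
  cases hbc with
  | weak h => exact weak (hab.trans h)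
  | strict hw hs hd => exact strict (hab.trans hw) hs hd

theorem head_step (hall : ∀ ρ, S ρ ∨ W ρ) [DecidablePred S] {ρ : R} {n : ℕ} {a b c : T}
    (hab : step ρ a b) (hbc : RelDeriv step S W n b c) :
    RelDeriv step S W ((if S ρ then 1 else 0) + n) a c := by
  by_cases hS : S ρ
  · rw [if_pos hS, Nat.add_comm]
    exact strict .refl ⟨ρ, hS, hab⟩ hbc
  · rw [if_neg hS, Nat.zero_add]
    exact head_weak (.single ⟨ρ, (hall ρ).resolve_left hS, hab⟩) hbc

theorem trans {m n : ℕ} {a b c : T} (hab : RelDeriv step S W m a b)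
    (hbc : RelDeriv step S W n b c) : RelDeriv step S W (m + n) a c := by
  induction hab with
  | weak h => simpa using head_weak h hbc
  | strict hw hs _ ih => simpa [Nat.add_right_comm] using strict hw hs (ih hbc)

theorem map {f : T → T} (hf : ∀ ρ a b, step ρ a b → step ρ (f a) (f b)) {n : ℕ} {a b : T}
    (h : RelDeriv step S W n a b) : RelDeriv step S W n (f a) (f b) := by
  have hfP : ∀ P : R → Prop, ∀ a b, RuleStep step P a b → RuleStep step P (f a) (f b) :=
    fun _ _ _ ⟨ρ, hρ, hs⟩ => ⟨ρ, hρ, hf ρ _ _ hs⟩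
  induction h with
  | weak hw => exact weak (hw.lift f (hfP W))
  | strict hw hs _ ih => exact strict (hw.lift f (hfP W)) (hfP S _ _ hs) ih

theorem exists_chain {n : ℕ} {a b : T} (h : RelDeriv step S W n a b) :
    ∃ c : ℕ → T, c 0 = a ∧ ∀ i < n, RelStep step S W (c i) (c (i + 1)) := by
  induction h with
  | weak _ => exact ⟨fun _ => _, rfl, fun i hi => absurd hi (Nat.not_lt_zero i)⟩
  | @strict a u v _ _ hw hs _ ih =>
    obtain ⟨c, hc0, hc⟩ := ih
    refine ⟨fun | 0 => a | i + 1 => c i, rfl, fun | 0, _ => ?_ | i + 1, hi => hc i (by omega)⟩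
    exact ⟨u, v, hw, hs, hc0 ▸ .refl⟩

end RelDeriv

theorem exists_relDeriv_comb {α : Type*} {comb : List T → T}
    (hctx : ∀ (ρ : R) (l₁ l₂ : List T) (s t : T), step ρ s t →
      step ρ (comb (l₁ ++ s :: l₂)) (comb (l₁ ++ t :: l₂)))
    (f : α → T) (g : α → ℕ) (xs : List α) (hxs : ∀ x ∈ xs, ∃ b, RelDeriv step S W (g x) (f x) b)
    (pre : List T) : ∃ b, RelDeriv step S W (xs.map g).sum (comb (pre ++ xs.map f)) b := by
  induction xs generalizing pre with
  | nil => exact ⟨_, by simpa using RelDeriv.refl _⟩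
  | cons x xs ih =>
    obtain ⟨b, hb⟩ := hxs x List.mem_cons_self
    obtain ⟨c, hc⟩ := ih (fun y hy => hxs y (List.mem_cons_of_mem x hy)) (pre ++ [b])
    have hhead := hb.map (f := fun t => comb (pre ++ t :: xs.map f)) (hctx · pre _)
    rw [List.append_assoc, List.singleton_append] at hc
    exact ⟨c, by simpa using hhead.trans hc⟩

end RelativeRewriting

namespace DTr

variable {T R : Type*}

theorem cnt_leaf (S : R → Prop) [DecidablePred S] (t : T) : (leaf t : DTr T R).cnt S = 0 := by
  rw [cnt]

theorem cnt_node (S : R → Prop) [DecidablePred S] (t : T) (ρ : R) (ts : List (DTr T R)) :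
    (node t ρ ts).cnt S = (if S ρ then 1 else 0) + (ts.map (cnt S)).sum := by
  rw [cnt, List.attach_map_val]

theorem valid.exists_relDeriv {step : R → T → T → Prop} {comb : List T → T}
    {S W : R → Prop} [DecidablePred S] (hall : ∀ ρ, S ρ ∨ W ρ)
    (hctx : ∀ (ρ : R) (l₁ l₂ : List T) (s t : T), step ρ s t →
      step ρ (comb (l₁ ++ s :: l₂)) (comb (l₁ ++ t :: l₂)))
    {d : DTr T R} (hd : d.valid step comb) : ∃ b, RelDeriv step S W (d.cnt S) d.rt b := by
  induction hd with
  | leaf t => exact ⟨t, cnt_leaf S t ▸ RelDeriv.refl t⟩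
  | node t ρ ts hstep _ ih =>
    obtain ⟨b, hb⟩ := exists_relDeriv_comb hctx rt (cnt S) ts ih []
    exact ⟨b, cnt_node S t ρ ts ▸ RelDeriv.head_step hall hstep hb⟩

end DTr

/-- from a finite derivation tree one can extract a relative rewrite
sequence of the same strict length. If rules are partitioned into strict rules `S` and
weak rules `W`, and rewrite steps are closed under compound contexts, then from the root
of any valid derivation tree `d` there is an `(S/W)`-derivation of length `|d|_S`,
i.e. `dh(root d, →_{S/W}) ≥ |d|_S`. -/
theorem stmt_17 {T R : Type*} (step : R → T → T → Prop) (comb : List T → T)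
    (S W : R → Prop) [DecidablePred S]
    (hall : ∀ ρ : R, S ρ ∨ W ρ)
    (hctx : ∀ (ρ : R) (l₁ l₂ : List T) (s t : T), step ρ s t →
      step ρ (comb (l₁ ++ s :: l₂)) (comb (l₁ ++ t :: l₂)))
    (d : DTr T R) (hd : DTr.valid step comb d) :
    ∃ c : ℕ → T, c 0 = d.rt ∧ ∀ i < d.cnt S,
      ∃ u v : T,
        Relation.ReflTransGen (fun a b => ∃ ρ, W ρ ∧ step ρ a b) (c i) u ∧
        (∃ ρ, S ρ ∧ step ρ u v) ∧
        Relation.ReflTransGen (fun a b => ∃ ρ, W ρ ∧ step ρ a b) v (c (i + 1)) := by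
  obtain ⟨b, hb⟩ := hd.exists_relDeriv hall hctx
  exact hb.exists_chain
end
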